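/- Let μ0 and μ1 be probability measures on a measurable space, and suppose for all measurable sets S: μ0(S) ≤ e^ε μ1(S) + δ and μ1(S) ≤ e^ε μ0(S) + δ, with ε, δ ≥ 0. Then for any probability distributions p0, p1 concentrated on the two points {0,1} (i.e., mixtures), the mixtures ν0 = p0(0)μ0 + p0(1)μ1 and ν1 = p1(0)μ0 + p1(1)μ1 satisfy ν0(S) ≤ e^(2ε) ν1(S) + (1+e^ε)δ for all measurable S. -/

import Mathlib

/-! A mixture value `p • μ₀ S + q • μ₁ S` lies between `min (μ₀ S) (μ₁ S)` and
`max (μ₀ S) (μ₁ S)`, and the two-sided hypothesis gives `max ≤ e^ε · min + δ`. Hence the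
mixtures are themselves `(ε, δ)`-close, and the bound follows by monotonicity in the parameters. -/

open MeasureTheory ENNReal

theorem max_le_mul_min_add {α : Type*} [LinearOrder α] [Mul α] [Add α] {a b c d : α}
    (hab : a ≤ c * b + d) (hba : b ≤ c * a + d) : max a b ≤ c * min a b + d := by
  rcases le_total a b with h | h
  · simpa [max_eq_right h, min_eq_left h] using hba
  · simpa [max_eq_left h, min_eq_right h] using hab

theorem Measure.mixture_apply_le_mul_mixture_apply_add {Ω : Type*} [MeasurableSpace Ω]
    {μ₀ μ₁ : Measure Ω} {c d : ℝ≥0∞}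
    (h₀₁ : ∀ S, MeasurableSet S → μ₀ S ≤ c * μ₁ S + d)
    (h₁₀ : ∀ S, MeasurableSet S → μ₁ S ≤ c * μ₀ S + d)
    {p₀ q₀ p₁ q₁ : ℝ≥0∞} (hpq₀ : p₀ + q₀ = 1) (hpq₁ : p₁ + q₁ = 1)
    {S : Set Ω} (hS : MeasurableSet S) :
    (p₀ • μ₀ + q₀ • μ₁) S ≤ c * (p₁ • μ₀ + q₁ • μ₁) S + d := by
  simp only [Measure.coe_add, Measure.coe_smul, Pi.add_apply, Pi.smul_apply]
  calc p₀ • μ₀ S + q₀ • μ₁ S ≤ max (μ₀ S) (μ₁ S) :=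
        Convex.combo_le_max _ _ zero_le zero_le hpq₀
    _ ≤ c * min (μ₀ S) (μ₁ S) + d := max_le_mul_min_add (h₀₁ S hS) (h₁₀ S hS)
    _ ≤ c * (p₁ • μ₀ S + q₁ • μ₁ S) + d := by
        gcongr
        exact Convex.min_le_combo _ _ zero_le zero_le hpq₁

theorem stmt_6_general {Ω : Type*} [MeasurableSpace Ω]
    (μ0 μ1 : Measure Ω)
    (ε δ : ℝ) (hε : 0 ≤ ε) (hδ : 0 ≤ δ)
    (h01 : ∀ S : Set Ω, MeasurableSet S →
      μ0 S ≤ ENNReal.ofReal (Real.exp ε) * μ1 S + ENNReal.ofReal δ)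
    (h10 : ∀ S : Set Ω, MeasurableSet S →
      μ1 S ≤ ENNReal.ofReal (Real.exp ε) * μ0 S + ENNReal.ofReal δ)
    (p00 p01 p10 p11 : ℝ≥0∞) (hp0 : p00 + p01 = 1) (hp1 : p10 + p11 = 1) :
    ∀ S : Set Ω, MeasurableSet S →
      (p00 • μ0 + p01 • μ1) S ≤
        ENNReal.ofReal (Real.exp (2 * ε)) * (p10 • μ0 + p11 • μ1) S +
          ENNReal.ofReal ((1 + Real.exp ε) * δ) := by
  intro S hS
  calc (p00 • μ0 + p01 • μ1) S
      ≤ ENNReal.ofReal (Real.exp ε) * (p10 • μ0 + p11 • μ1) S + ENNReal.ofReal δ :=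
        Measure.mixture_apply_le_mul_mixture_apply_add h01 h10 hp0 hp1 hS
    _ ≤ _ := by
        gcongr
        · linarith
        · nlinarith [Real.exp_pos ε]

theorem stmt_6 {Ω : Type*} [MeasurableSpace Ω]
    (μ0 μ1 : Measure Ω) [IsProbabilityMeasure μ0] [IsProbabilityMeasure μ1]
    (ε δ : ℝ) (hε : 0 ≤ ε) (hδ : 0 ≤ δ)
    (h01 : ∀ S : Set Ω, MeasurableSet S →
      μ0 S ≤ ENNReal.ofReal (Real.exp ε) * μ1 S + ENNReal.ofReal δ)
    (h10 : ∀ S : Set Ω, MeasurableSet S →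
      μ1 S ≤ ENNReal.ofReal (Real.exp ε) * μ0 S + ENNReal.ofReal δ)
    (p00 p01 p10 p11 : ℝ≥0∞) (hp0 : p00 + p01 = 1) (hp1 : p10 + p11 = 1) :
    ∀ S : Set Ω, MeasurableSet S →
      (p00 • μ0 + p01 • μ1) S ≤
        ENNReal.ofReal (Real.exp (2 * ε)) * (p10 • μ0 + p11 • μ1) S +
          ENNReal.ofReal ((1 + Real.exp ε) * δ) :=
  stmt_6_general μ0 μ1 ε δ hε hδ h01 h10 p00 p01 p10 p11 hp0 hp1
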